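/- For every real ε > 0, there exists a finite set P of distinct points in ℝ² such that the average, over all subsets R with ∅ ≠ R ⊊ P, of (mst(R) + mst(P \ R))/mst(P), is greater than (3 + 2√3)/3 − ε. -/

import Mathlib

/-!
Put `N` points within distance `δ` of each vertex of an equilateral triangle inscribed in the
unit circle, on the rays from the centre, and one point at the centre. Joining cluster points to
their vertex and the vertices to the centre shows `mst P ≤ 3 (1 + N δ)`.

For a lower bound on the length of a tree, pick three of its vertices: the path joining two of them
together with a path from the third meeting it only at its end `m` are edge-disjoint, so the tree
is at least as long as the sum of the distances from `m` to the three vertices. Hence a set meeting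
all three clusters has `mst ≥ 3 - 3δ` (the centre is the Fermat point of the triangle), and a set
inside the clusters meeting all three has `mst ≥ 2√3 - 4δ` (each of its points is far from two
of the clusters).

If `R` splits every cluster, then whichever of `R` and `P \ R` misses the centre lies inside the
clusters while both meet all three, so `mst R + mst (P \ R) ≥ 3 + 2√3 - 7δ`. All but a fraction
`12 / 2 ^ N` of the subsets split every cluster, so the average ratio is at least
`(1 - 12 / 2 ^ N) (3 + 2√3 - 7δ) / (3 (1 + N δ))`, which tends to `(3 + 2√3) / 3`.
-/

open scoped Classical

/-- The length of a minimum spanning tree of a finite point set `S` in a metric space: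
the infimum, over all trees with vertex set `S`, of the sum of distances over the edges. -/
noncomputable def mst {X : Type*} [MetricSpace X] (S : Finset X) : ℝ :=
  sInf {c : ℝ | ∃ G : SimpleGraph S, G.IsTree ∧
    c = ∑ᶠ e ∈ G.edgeSet,
      Sym2.lift ⟨fun (u v : S) => dist (u : X) (v : X), fun _ _ => dist_comm _ _⟩ e}

open Finset

section GraphLength

variable {V X : Type*} [MetricSpace X]

noncomputable def edgeLength (f : V → X) : Sym2 V → ℝ :=
  Sym2.lift ⟨fun u v => dist (f u) (f v), fun u v => dist_comm (f u) (f v)⟩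

noncomputable def graphLength (f : V → X) (G : SimpleGraph V) : ℝ :=
  ∑ᶠ e ∈ G.edgeSet, edgeLength f e

@[simp]
lemma edgeLength_mk (f : V → X) (u v : V) : edgeLength f s(u, v) = dist (f u) (f v) := rfl

lemma edgeLength_nonneg (f : V → X) (e : Sym2 V) : 0 ≤ edgeLength f e := by
  induction e using Sym2.ind with
  | _ u v => exact dist_nonneg

variable [Fintype V]

lemma graphLength_eq_sum (f : V → X) (G : SimpleGraph V) :
    graphLength f G = ∑ e ∈ G.edgeFinset, edgeLength f e := by
  rw [graphLength, ← finsum_mem_coe_finset, SimpleGraph.coe_edgeFinset]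

lemma graphLength_nonneg (f : V → X) (G : SimpleGraph V) : 0 ≤ graphLength f G := by
  rw [graphLength_eq_sum]
  exact sum_nonneg fun e _ => edgeLength_nonneg f e

lemma graphLength_mono (f : V → X) {G H : SimpleGraph V} (h : G ≤ H) :
    graphLength f G ≤ graphLength f H := by
  simp only [graphLength_eq_sum]
  exact sum_le_sum_of_subset_of_nonneg (SimpleGraph.edgeFinset_mono h) fun e _ _ =>
    edgeLength_nonneg f e

lemma sum_edgeLength_le_graphLength (f : V → X) {G : SimpleGraph V} {l : List (Sym2 V)}
    (hl : l.Nodup) (hG : ∀ e ∈ l, e ∈ G.edgeSet) :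
    (l.map (edgeLength f)).sum ≤ graphLength f G := by
  rw [graphLength_eq_sum, ← List.sum_toFinset _ hl]
  refine sum_le_sum_of_subset_of_nonneg (fun e he => ?_) fun e _ _ => edgeLength_nonneg f e
  simpa using hG e (List.mem_toFinset.mp he)

end GraphLength

section Walk

variable {V X : Type*} [MetricSpace X] {G : SimpleGraph V}

lemma dist_le_sum_edgeLength_walk (f : V → X) {u v : V} (p : G.Walk u v) :
    dist (f u) (f v) ≤ (p.edges.map (edgeLength f)).sum := by
  induction p with
  | nil => simp
  | cons h q ih =>
    rw [SimpleGraph.Walk.edges_cons, List.map_cons, List.sum_cons, edgeLength_mk]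
    exact (dist_triangle _ _ _).trans (by gcongr)

lemma exists_walk_to_support_disjoint_edges {a b z x : V} (p : G.Walk a b) (q : G.Walk z x)
    (hx : x ∈ p.support) :
    ∃ m ∈ p.support, ∃ r : G.Walk z m, ∀ e ∈ r.edges, e ∉ p.edges := by
  induction q with
  | nil => exact ⟨_, hx, .nil, by simp⟩
  | @cons u w x h q ih =>
    by_cases hu : u ∈ p.support
    · exact ⟨u, hu, .nil, by simp⟩
    · obtain ⟨m, hm, r, hr⟩ := ih hx
      refine ⟨m, hm, .cons h r, fun e he => ?_⟩
      rcases List.mem_cons.mp (SimpleGraph.Walk.edges_cons h r ▸ he) with rfl | he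
      · exact fun hmem => hu (p.fst_mem_support_of_mem_edges hmem)
      · exact hr e he

variable [Fintype V]

lemma exists_sum_dist_le_graphLength (f : V → X) (hG : G.Connected)
    (x : Fin 3 → V) : ∃ m, ∑ i, dist (f (x i)) (f m) ≤ graphLength f G := by
  obtain ⟨p, hp⟩ := (hG.preconnected (x 0) (x 1)).exists_isPath
  obtain ⟨q⟩ := hG.preconnected (x 2) (x 0)
  obtain ⟨m, hm, r, hr⟩ := exists_walk_to_support_disjoint_edges p q p.start_mem_support
  refine ⟨m, ?_⟩
  have hr' : ∀ e ∈ r.bypass.edges, e ∉ p.edges := fun e he =>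
    hr e (r.edges_bypass_subset_edges he)
  have hnodup : (p.edges ++ r.bypass.edges).Nodup :=
    List.nodup_append.mpr ⟨hp.isTrail.edges_nodup, r.bypass_isPath.isTrail.edges_nodup,
      fun e hep e' her heq => hr' e' her (heq ▸ hep)⟩
  have hsub : ∀ e ∈ p.edges ++ r.bypass.edges, e ∈ G.edgeSet := fun e he =>
    (List.mem_append.mp he).elim (fun he => p.edges_subset_edgeSet he)
      (fun he => r.bypass.edges_subset_edgeSet he)
  have hlen := sum_edgeLength_le_graphLength f hnodup hsub
  rw [← p.take_spec hm, SimpleGraph.Walk.edges_append] at hlen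
  simp only [List.map_append, List.sum_append] at hlen
  have h0 := dist_le_sum_edgeLength_walk f (p.takeUntil m hm)
  have h1 := dist_le_sum_edgeLength_walk f (p.dropUntil m hm)
  have h2 := dist_le_sum_edgeLength_walk f r.bypass
  rw [Fin.sum_univ_three, dist_comm (f (x 1))]
  linarith

end Walk

section MinimumSpanningTree

variable {X : Type*} [MetricSpace X]

lemma mst_eq_sInf (S : Finset X) :
    mst S = sInf {c | ∃ G : SimpleGraph S, G.IsTree ∧ c = graphLength Subtype.val G} := rfl

lemma mst_nonneg (S : Finset X) : 0 ≤ mst S := by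
  rw [mst_eq_sInf]
  refine Real.sInf_nonneg ?_
  rintro c ⟨G, -, rfl⟩
  exact graphLength_nonneg _ G

lemma mst_le_graphLength (S : Finset X) {H : SimpleGraph S} (hH : H.Connected) :
    mst S ≤ graphLength Subtype.val H := by
  obtain ⟨T, hTH, hT⟩ := hH.exists_isTree_le
  have hbdd : BddBelow {c | ∃ G : SimpleGraph S, G.IsTree ∧ c = graphLength Subtype.val G} :=
    ⟨0, by rintro c ⟨G, -, rfl⟩; exact graphLength_nonneg _ G⟩
  exact (csInf_le hbdd ⟨T, hT, rfl⟩).trans (graphLength_mono _ hTH)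

lemma le_mst_of_forall_le_sum_dist (S : Finset X) (x : Fin 3 → X) (hx : ∀ i, x i ∈ S) {B : ℝ}
    (hB : ∀ w ∈ S, B ≤ ∑ i, dist (x i) w) : B ≤ mst S := by
  have : Nonempty S := ⟨⟨x 0, hx 0⟩⟩
  obtain ⟨T, -, hT⟩ := (SimpleGraph.connected_top (V := S)).exists_isTree_le
  refine le_csInf ⟨_, T, hT, rfl⟩ ?_
  rintro c ⟨G, hG, rfl⟩
  obtain ⟨m, hm⟩ := exists_sum_dist_le_graphLength Subtype.val hG.connected fun i => ⟨x i, hx i⟩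
  exact (hB m m.2).trans hm

/-- The edges `{x, p x}` form a connected graph on `S`, since every point reaches `r`. -/
lemma mst_le_sum_dist_of_iterate_eq (S : Finset X) (p : X → X) (hp : ∀ x ∈ S, p x ∈ S)
    {r : X} (hr : r ∈ S) (hroot : ∀ x ∈ S, ∃ k, p^[k] x = r) :
    mst S ≤ ∑ x ∈ S, dist x (p x) := by
  let q : S → S := fun x => ⟨p x, hp x x.2⟩
  have hq : Function.Semiconj Subtype.val q p := fun _ => rfl
  -- `H` is kept opaque so that `H.edgeFinset` uses the generic `Fintype` instance.
  obtain ⟨H, hH⟩ : ∃ H, H = SimpleGraph.fromEdgeSet (Set.range fun x : S => s(x, q x)) :=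
    ⟨_, rfl⟩
  have hstep : ∀ x, H.Reachable x (q x) := by
    intro x
    by_cases hx : x = q x
    · rw [← hx]
    · exact SimpleGraph.Adj.reachable (hH ▸ ⟨⟨x, rfl⟩, hx⟩)
  have hiter : ∀ k x, H.Reachable x (q^[k] x) := by
    intro k
    induction k with
    | zero => exact fun x => .refl x
    | succ k ih => exact fun x => (ih x).trans (Function.iterate_succ_apply' q k x ▸ hstep _)
  have hreach : ∀ x : S, H.Reachable x ⟨r, hr⟩ := by
    intro x
    obtain ⟨k, hk⟩ := hroot x x.2
    have hqk : q^[k] x = ⟨r, hr⟩ := Subtype.ext ((hq.iterate_right k x).trans hk)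
    exact hqk ▸ hiter k x
  have : Nonempty S := ⟨⟨r, hr⟩⟩
  have hconn : H.Connected := .mk fun x y => (hreach x).trans (hreach y).symm
  calc mst S ≤ graphLength Subtype.val H := mst_le_graphLength S hconn
    _ ≤ ∑ e ∈ univ.image fun x : S => s(x, q x), edgeLength Subtype.val e := by
      rw [graphLength_eq_sum]
      refine sum_le_sum_of_subset_of_nonneg (fun e he => ?_) fun e _ _ => edgeLength_nonneg _ e
      have he : e ∈ H.edgeSet := SimpleGraph.mem_edgeFinset.mp he
      rw [hH, SimpleGraph.edgeSet_fromEdgeSet] at he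
      obtain ⟨⟨x, rfl⟩, -⟩ := he
      exact mem_image_of_mem _ (mem_univ x)
    _ ≤ ∑ x : S, edgeLength Subtype.val s(x, q x) :=
      sum_image_le_of_nonneg fun e _ => edgeLength_nonneg _ e
    _ = ∑ x ∈ S, dist x (p x) := sum_coe_sort S fun x => dist x (p x)

end MinimumSpanningTree

lemma Finset.sum_biUnion_le_sum_sum {ι α : Type*} [DecidableEq α] (s : Finset ι)
    (t : ι → Finset α) {f : α → ℝ} (hf : ∀ x, 0 ≤ f x) :
    ∑ x ∈ s.biUnion t, f x ≤ ∑ i ∈ s, ∑ x ∈ t i, f x := by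
  have h : s.biUnion t = (s.sigma t).image Sigma.snd := by ext; simp
  rw [h]
  exact (sum_image_le_of_nonneg fun x _ => hf x).trans_eq (sum_sigma s t fun x => f x.2)


section Counting

variable {α : Type*} [DecidableEq α]

def Finset.Splits (R T : Finset α) : Prop := (R ∩ T).Nonempty ∧ (T \ R).Nonempty

lemma card_filter_not_splits_le {P T : Finset α} (hT : T ⊆ P) :
    #{R ∈ P.powerset | ¬Splits R T} ≤ 2 * 2 ^ (#P - #T) := by
  have hsub : {R ∈ P.powerset | ¬Splits R T} ⊆ (P \ T).powerset ∪ Icc T P := by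
    intro R hR
    rw [mem_filter, mem_powerset, Finset.Splits, not_and_or, not_nonempty_iff_eq_empty,
      not_nonempty_iff_eq_empty, sdiff_eq_empty_iff_subset] at hR
    rw [mem_union, mem_powerset, mem_Icc, subset_sdiff, disjoint_iff_inter_eq_empty]
    tauto
  calc #{R ∈ P.powerset | ¬Splits R T} ≤ #((P \ T).powerset ∪ Icc T P) := card_le_card hsub
    _ ≤ #(P \ T).powerset + #(Icc T P) := card_union_le _ _
    _ = 2 * 2 ^ (#P - #T) := by
      rw [card_powerset, card_Icc_finset hT, card_sdiff_of_subset hT]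
      ring

lemma card_filter_not_forall_splits_le {ι : Type*} [Fintype ι] {P : Finset α}
    {T : ι → Finset α} {N : ℕ} [DecidablePred fun R => ∀ i, Splits R (T i)] (hT : ∀ i, T i ⊆ P)
    (hN : ∀ i, #(T i) = N) :
    #{R ∈ P.powerset | ¬∀ i, Splits R (T i)} ≤ Fintype.card ι * (2 * 2 ^ (#P - N)) := by
  have hsub : {R ∈ P.powerset | ¬∀ i, Splits R (T i)} ⊆
      univ.biUnion fun i => {R ∈ P.powerset | ¬Splits R (T i)} := by
    intro R hR
    obtain ⟨hRP, hR⟩ := mem_filter.mp hR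
    obtain ⟨i, hi⟩ := not_forall.mp hR
    exact mem_biUnion.mpr ⟨i, mem_univ i, mem_filter.mpr ⟨hRP, hi⟩⟩
  refine (card_le_card hsub).trans (card_biUnion_le_card_mul _ _ _ fun i _ => ?_)
  exact hN i ▸ card_filter_not_splits_le (hT i)

lemma card_filter_nonempty_ne_self (P : Finset α) (hP : P.Nonempty) :
    #{R ∈ P.powerset | R.Nonempty ∧ R ≠ P} = 2 ^ #P - 2 := by
  have h : {R ∈ P.powerset | R.Nonempty ∧ R ≠ P} = (P.powerset.erase ∅).erase P := by
    ext R
    simp [nonempty_iff_ne_empty, and_comm, and_assoc]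
  rw [h, card_erase_of_mem, card_erase_of_mem (empty_mem_powerset P), card_powerset]
  · rfl
  · exact mem_erase.mpr ⟨hP.ne_empty, mem_powerset_self P⟩

end Counting

lemma one_sub_div_mul_le_sum_div {ι : Type*} (F : Finset ι) (p : ι → Prop) [DecidablePred p]
    {f : ι → ℝ} {t b : ℝ} (ht : 0 ≤ t) (hf : ∀ i ∈ F, 0 ≤ f i) (hp : ∀ i ∈ F, p i → t ≤ f i)
    (hb : #{i ∈ F | ¬p i} ≤ b) (hF : F.Nonempty) :
    (1 - b / #F) * t ≤ (∑ i ∈ F, f i) / #F := by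
  have hFpos : (0 : ℝ) < #F := by exact_mod_cast hF.card_pos
  have hpartition : (#{i ∈ F | p i} : ℝ) + #{i ∈ F | ¬p i} = #F := by
    exact_mod_cast card_filter_add_card_filter_not p
  have hgood : #{i ∈ F | p i} * t ≤ ∑ i ∈ F, f i :=
    calc #{i ∈ F | p i} * t = ∑ i ∈ F with p i, t := by rw [sum_const, nsmul_eq_mul]
      _ ≤ ∑ i ∈ F with p i, f i :=
        sum_le_sum fun i hi => hp i (mem_filter.mp hi).1 (mem_filter.mp hi).2
      _ ≤ ∑ i ∈ F, f i := sum_le_sum_of_subset_of_nonneg (filter_subset p F) fun i hi _ => hf i hi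
  have hcount : (#F - b) * t ≤ #{i ∈ F | p i} * t := mul_le_mul_of_nonneg_right (by linarith) ht
  rw [le_div_iff₀ hFpos, mul_right_comm, sub_mul, div_mul_cancel₀ _ hFpos.ne', one_mul]
  linarith

lemma six_mul_two_pow_sub_div_le {n N : ℕ} (hNn : N ≤ n) (hn : 2 ≤ n) :
    6 * 2 ^ (n - N) / (2 ^ n - 2 : ℝ) ≤ 12 / 2 ^ N := by
  have h4 : (4 : ℝ) ≤ 2 ^ n := by
    calc (4 : ℝ) = 2 ^ 2 := by norm_num
      _ ≤ 2 ^ n := pow_le_pow_right₀ one_le_two hn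
  have hpow : (2 : ℝ) ^ n = 2 ^ (n - N) * 2 ^ N := by rw [← pow_add, Nat.sub_add_cancel hNn]
  rw [div_le_div_iff₀ (by linarith) (by positivity)]
  nlinarith [pow_pos (two_pos (α := ℝ)) (n - N)]

section UnitTriangle

variable {E : Type*} [NormedAddCommGroup E] [InnerProductSpace ℝ E]

open scoped RealInnerProductSpace

/-- Each `dist (v i) w` is at least `1 - ⟪v i, w⟫` by Cauchy–Schwarz, and these inner products
sum to `⟪∑ i, v i, w⟫ = 0`. -/
lemma card_le_sum_dist_of_sum_eq_zero {ι : Type*} [Fintype ι] (v : ι → E) (hv : ∀ i, ‖v i‖ = 1)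
    (hsum : ∑ i, v i = 0) (w : E) : (Fintype.card ι : ℝ) ≤ ∑ i, dist (v i) w := by
  have hterm : ∀ i, 1 - ⟪v i, w⟫ ≤ dist (v i) w := by
    intro i
    have h := real_inner_le_norm (v i) (v i - w)
    rwa [inner_sub_right, real_inner_self_eq_norm_sq, hv i, one_pow, one_mul, ← dist_eq_norm] at h
  calc (Fintype.card ι : ℝ) = ∑ i, (1 - ⟪v i, w⟫) := by
        simp [sum_sub_distrib, ← sum_inner, hsum]
    _ ≤ ∑ i, dist (v i) w := sum_le_sum fun i _ => hterm i

lemma dist_eq_sqrt_three_of_norm_add_eq_one {x y : E} (hx : ‖x‖ = 1) (hy : ‖y‖ = 1)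
    (hxy : ‖x + y‖ = 1) : dist x y = √3 := by
  have h := parallelogram_law_with_norm ℝ x y
  rw [hx, hy, hxy, ← dist_eq_norm] at h
  rw [← Real.sqrt_sq dist_nonneg]
  congr 1
  linarith

lemma dist_eq_sqrt_three (v : Fin 3 → E) (hv : ∀ i, ‖v i‖ = 1) (hsum : ∑ i, v i = 0)
    {i j : Fin 3} (hij : i ≠ j) : dist (v i) (v j) = √3 := by
  refine dist_eq_sqrt_three_of_norm_add_eq_one (hv i) (hv j) ?_
  obtain ⟨k, hk⟩ : ∃ k, univ \ {i, j} = {k} :=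
    card_eq_one.mp (by rw [card_univ_sdiff, card_pair hij]; rfl)
  have h := sum_sdiff (subset_univ {i, j}) (f := v)
  rw [hk, sum_singleton, sum_pair hij, hsum, add_eq_zero_iff_neg_eq] at h
  rw [← h, norm_neg, hv]

end UnitTriangle

section RadialParent

variable {E : Type*} [NormedAddCommGroup E] [NormedSpace ℝ E] {u : E}

/-- The parent map of the spanning tree of the construction: a cluster point goes to its vertex, a
vertex to the origin, and the origin to itself (as `‖0‖⁻¹ • 0 = 0`). -/
noncomputable def radialParent (x : E) : E :=
  if ‖x‖ = 1 then 0 else ‖x‖⁻¹ • x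

lemma radialParent_zero : radialParent (0 : E) = 0 := by simp [radialParent]

lemma radialParent_radialParent (x : E) : radialParent (radialParent x) = 0 := by
  unfold radialParent
  by_cases hx : ‖x‖ = 1
  · simp [hx]
  · by_cases hx0 : x = 0
    · simp [hx0]
    · simp [hx, norm_smul, inv_mul_cancel₀ (norm_ne_zero_iff.mpr hx0)]

lemma radialParent_smul (hu : ‖u‖ = 1) {t : ℝ} (ht : 0 < t) :
    radialParent (t • u) = if t = 1 then 0 else u := by
  rw [radialParent, norm_smul, hu, mul_one, Real.norm_of_nonneg ht.le, smul_smul,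
    inv_mul_cancel₀ ht.ne', one_smul]

lemma dist_smul_radialParent (hu : ‖u‖ = 1) {t : ℝ} (ht : 1 ≤ t) :
    dist (t • u) (radialParent (t • u)) = if t = 1 then 1 else t - 1 := by
  rw [radialParent_smul hu (by linarith)]
  split_ifs with h1
  · rw [h1, one_smul, dist_zero_right, hu]
  · have : t • u - u = (t - 1) • u := by rw [sub_smul, one_smul]
    rw [dist_eq_norm, this, norm_smul, hu, mul_one, Real.norm_of_nonneg (by linarith)]

end RadialParent

section Cluster

variable {E : Type*} [NormedAddCommGroup E] [NormedSpace ℝ E] [DecidableEq E] {u x : E} {δ : ℝ}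
  {N : ℕ}

noncomputable def cluster (δ : ℝ) (N : ℕ) (u : E) : Finset E :=
  (range N).image fun i : ℕ => (1 + i * δ / N : ℝ) • u

lemma self_mem_cluster (hN : N ≠ 0) : u ∈ cluster δ N u :=
  mem_image.mpr ⟨0, mem_range.mpr (Nat.pos_of_ne_zero hN), by simp⟩

lemma card_cluster (hu : u ≠ 0) (hδ : 0 < δ) : #(cluster δ N u) = N := by
  refine (card_image_of_injOn fun i hi j _ hij => ?_).trans (card_range N)
  have hN : (0 : ℝ) < N := by exact_mod_cast Nat.zero_lt_of_lt (mem_range.mp hi)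
  have h := smul_left_injective ℝ hu hij
  simp only [add_right_inj, div_left_inj' hN.ne', mul_left_inj' hδ.ne'] at h
  exact_mod_cast h

lemma natCast_mul_div_le_of_lt {i : ℕ} (hi : i < N) (hδ : 0 ≤ δ) : i * δ / N ≤ δ := by
  have hN : (0 : ℝ) < N := by exact_mod_cast Nat.zero_lt_of_lt hi
  rw [div_le_iff₀ hN, mul_comm]
  gcongr

lemma dist_le_of_mem_cluster (hu : ‖u‖ = 1) (hδ : 0 ≤ δ) (hx : x ∈ cluster δ N u) :
    dist x u ≤ δ := by
  obtain ⟨i, hi, rfl⟩ := mem_image.mp hx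
  have h : (1 + i * δ / N) • u - u = (i * δ / N : ℝ) • u := by
    rw [add_smul, one_smul, add_sub_cancel_left]
  rw [dist_eq_norm, h, norm_smul, hu, mul_one, Real.norm_of_nonneg (by positivity)]
  exact natCast_mul_div_le_of_lt (mem_range.mp hi) hδ

lemma sum_dist_radialParent_cluster_le (hu : ‖u‖ = 1) (hδ : 0 < δ) :
    ∑ x ∈ cluster δ N u, dist x (radialParent x) ≤ 1 + N * δ := by
  have hterm : ∀ i ∈ range N, dist ((1 + i * δ / N) • u) (radialParent ((1 + i * δ / N) • u))
      ≤ (if i = 0 then 1 else 0) + δ := by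
    intro i hi
    have hscale := natCast_mul_div_le_of_lt (mem_range.mp hi) hδ.le
    have hpos : (0 : ℝ) ≤ i * δ / N := by positivity
    rw [dist_smul_radialParent hu (by linarith)]
    rcases eq_or_ne i 0 with rfl | hi0
    · simp [hδ.le]
    · have hN : (0 : ℝ) < N := by exact_mod_cast Nat.zero_lt_of_lt (mem_range.mp hi)
      have : (i : ℝ) * δ / N ≠ 0 := by positivity
      simp [hi0, this, hscale]
  calc ∑ x ∈ cluster δ N u, dist x (radialParent x)
      ≤ ∑ i ∈ range N, dist ((1 + i * δ / N) • u) (radialParent ((1 + i * δ / N) • u)) :=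
        sum_image_le_of_nonneg fun _ _ => dist_nonneg
    _ ≤ ∑ i ∈ range N, ((if i = 0 then 1 else 0) + δ) := sum_le_sum hterm
    _ ≤ 1 + N * δ := by
        rw [sum_add_distrib, sum_ite_eq', sum_const, card_range, nsmul_eq_mul]
        split_ifs <;> linarith [mul_nonneg N.cast_nonneg hδ.le]

end Cluster

noncomputable def averageSplitRatio {X : Type*} [MetricSpace X] [DecidableEq X] (P : Finset X) :
    ℝ :=
  (∑ R ∈ P.powerset.filter (fun R => R.Nonempty ∧ R ≠ P), (mst R + mst (P \ R)) / mst P) /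
    ((2 : ℝ) ^ P.card - 2)

/-- `1 - 12 / 2 ^ N` bounds the fraction of subsets splitting every cluster from below,
`3 + 2√3 - 7δ` the numerators of their ratios, and `3 (1 + N δ)` the denominator. -/
noncomputable def averageSplitRatioBound (N : ℕ) (δ : ℝ) : ℝ :=
  (1 - 12 / 2 ^ N) * ((3 + 2 * √3 - 7 * δ) / (3 * (1 + N * δ)))

section Construction

variable {E : Type*} [NormedAddCommGroup E] [InnerProductSpace ℝ E] [DecidableEq E]
  {v : Fin 3 → E} {δ : ℝ} {N : ℕ} {S R : Finset E}

noncomputable def clusterPointSet (v : Fin 3 → E) (δ : ℝ) (N : ℕ) : Finset E :=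
  insert 0 (univ.biUnion fun i => cluster δ N (v i))

lemma cluster_subset_clusterPointSet (i : Fin 3) :
    cluster δ N (v i) ⊆ clusterPointSet v δ N :=
  (subset_biUnion_of_mem (fun i => cluster δ N (v i)) (mem_univ i)).trans (subset_insert _ _)

lemma mst_clusterPointSet_le (hv : ∀ i, ‖v i‖ = 1) (hδ : 0 < δ) (hN : N ≠ 0) :
    mst (clusterPointSet v δ N) ≤ 3 * (1 + N * δ) := by
  have hmaps : ∀ x ∈ clusterPointSet v δ N, radialParent x ∈ clusterPointSet v δ N := by
    intro x hx
    rcases mem_insert.mp hx with rfl | hx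
    · rw [radialParent_zero]
      exact mem_insert_self _ _
    obtain ⟨i, -, hx⟩ := mem_biUnion.mp hx
    obtain ⟨n, -, rfl⟩ := mem_image.mp hx
    rw [radialParent_smul (hv i) (by positivity)]
    split_ifs
    · exact mem_insert_self _ _
    · exact cluster_subset_clusterPointSet i (self_mem_cluster hN)
  calc mst (clusterPointSet v δ N)
      ≤ ∑ x ∈ clusterPointSet v δ N, dist x (radialParent x) :=
        mst_le_sum_dist_of_iterate_eq _ _ hmaps (mem_insert_self _ _)
          fun x _ => ⟨2, radialParent_radialParent x⟩
    _ ≤ ∑ i, ∑ x ∈ cluster δ N (v i), dist x (radialParent x) := by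
        rw [clusterPointSet, sum_insert_zero (by rw [radialParent_zero, dist_self])]
        exact sum_biUnion_le_sum_sum _ _ fun x => dist_nonneg
    _ ≤ ∑ _i : Fin 3, (1 + N * δ) :=
        sum_le_sum fun i _ => sum_dist_radialParent_cluster_le (hv i) hδ
    _ = 3 * (1 + N * δ) := by simp; ring

lemma three_sub_le_mst_of_inter_nonempty (hv : ∀ i, ‖v i‖ = 1) (hsum : ∑ i, v i = 0)
    (hδ : 0 ≤ δ) (hS : ∀ i, (S ∩ cluster δ N (v i)).Nonempty) : 3 - 3 * δ ≤ mst S := by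
  choose x hx using hS
  refine le_mst_of_forall_le_sum_dist S x (fun i => (mem_inter.mp (hx i)).1) fun w _ => ?_
  have hclose : ∀ i, dist (v i) w - δ ≤ dist (x i) w := fun i => by
    have := dist_le_of_mem_cluster (hv i) hδ (mem_inter.mp (hx i)).2
    linarith [dist_triangle (v i) (x i) w, dist_comm (v i) (x i)]
  have hfermat := card_le_sum_dist_of_sum_eq_zero v hv hsum w
  calc 3 - 3 * δ ≤ ∑ i, (dist (v i) w - δ) := by
        simp only [sum_sub_distrib, sum_const, card_univ, Fintype.card_fin, nsmul_eq_mul,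
          Nat.cast_ofNat] at hfermat ⊢
        linarith
    _ ≤ ∑ i, dist (x i) w := sum_le_sum fun i _ => hclose i

lemma two_mul_sqrt_three_sub_le_mst_of_subset (hv : ∀ i, ‖v i‖ = 1) (hsum : ∑ i, v i = 0)
    (hδ : 0 ≤ δ) (hS : S ⊆ univ.biUnion fun i => cluster δ N (v i))
    (hmeet : ∀ i, (S ∩ cluster δ N (v i)).Nonempty) : 2 * (√3 - 2 * δ) ≤ mst S := by
  choose x hx using hmeet
  refine le_mst_of_forall_le_sum_dist S x (fun i => (mem_inter.mp (hx i)).1) fun w hw => ?_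
  obtain ⟨j, -, hwj⟩ := mem_biUnion.mp (hS hw)
  have hfar : ∀ i, (if i = j then 0 else √3 - 2 * δ) ≤ dist (x i) w := fun i => by
    split_ifs with hij
    · exact dist_nonneg
    · have hxi := dist_le_of_mem_cluster (hv i) hδ (mem_inter.mp (hx i)).2
      have hwj := dist_le_of_mem_cluster (hv j) hδ hwj
      linarith [dist_eq_sqrt_three v hv hsum hij, dist_triangle4 (v i) (x i) w (v j),
        dist_comm (v i) (x i)]
  calc 2 * (√3 - 2 * δ) = ∑ i, if i = j then 0 else √3 - 2 * δ := by
        simp [sum_ite, filter_ne']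
        ring
    _ ≤ ∑ i, dist (x i) w := sum_le_sum fun i _ => hfar i

lemma le_mst_add_mst_sdiff (hv : ∀ i, ‖v i‖ = 1) (hsum : ∑ i, v i = 0) (hδ : 0 ≤ δ)
    (hR : R ⊆ clusterPointSet v δ N)
    (hsplit : ∀ i, Splits R (cluster δ N (v i))) :
    3 + 2 * √3 - 7 * δ ≤ mst R + mst (clusterPointSet v δ N \ R) := by
  have hmeet : ∀ i, (R ∩ cluster δ N (v i)).Nonempty := fun i => (hsplit i).1
  have hmeet' : ∀ i, ((clusterPointSet v δ N \ R) ∩ cluster δ N (v i)).Nonempty := by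
    intro i
    obtain ⟨x, hx⟩ := (hsplit i).2
    obtain ⟨hxC, hxR⟩ := mem_sdiff.mp hx
    exact ⟨x, mem_inter.mpr ⟨mem_sdiff.mpr ⟨cluster_subset_clusterPointSet i hxC, hxR⟩, hxC⟩⟩
  by_cases h0 : (0 : E) ∈ R
  · have hsub : clusterPointSet v δ N \ R ⊆ univ.biUnion fun i => cluster δ N (v i) :=
      (subset_insert_iff_of_notMem fun h => (mem_sdiff.mp h).2 h0).mp sdiff_subset
    linarith [three_sub_le_mst_of_inter_nonempty hv hsum hδ hmeet,
      two_mul_sqrt_three_sub_le_mst_of_subset hv hsum hδ hsub hmeet']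
  · have hsub : R ⊆ univ.biUnion fun i => cluster δ N (v i) :=
      (subset_insert_iff_of_notMem h0).mp hR
    linarith [three_sub_le_mst_of_inter_nonempty hv hsum hδ hmeet',
      two_mul_sqrt_three_sub_le_mst_of_subset hv hsum hδ hsub hmeet]

lemma mst_clusterPointSet_pos (hv : ∀ i, ‖v i‖ = 1) (hsum : ∑ i, v i = 0) (hδ : 0 ≤ δ)
    (hδ' : δ < 1) (hN : N ≠ 0) : 0 < mst (clusterPointSet v δ N) :=
  lt_of_lt_of_le (by linarith) <| three_sub_le_mst_of_inter_nonempty hv hsum hδ fun i =>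
    ⟨v i, mem_inter.mpr
      ⟨cluster_subset_clusterPointSet i (self_mem_cluster hN), self_mem_cluster hN⟩⟩

lemma two_le_card_clusterPointSet (hv : ∀ i, ‖v i‖ = 1) (hN : N ≠ 0) :
    2 ≤ #(clusterPointSet v δ N) := by
  have h0v : (0 : E) ≠ v 0 := fun h => by simpa [← h] using hv 0
  calc 2 = #{0, v 0} := (card_pair h0v).symm
    _ ≤ #(clusterPointSet v δ N) := card_le_card <| insert_subset (mem_insert_self _ _) <|
      singleton_subset_iff.mpr (cluster_subset_clusterPointSet 0 (self_mem_cluster hN))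

lemma card_filter_not_forall_splits_cluster_le (hv : ∀ i, ‖v i‖ = 1) (hδ : 0 < δ) :
    #{R ∈ (clusterPointSet v δ N).powerset | ¬∀ i, Splits R (cluster δ N (v i))} ≤
      6 * 2 ^ (#(clusterPointSet v δ N) - N) := by
  have h := card_filter_not_forall_splits_le (fun i => cluster_subset_clusterPointSet (N := N) i)
    fun i => card_cluster (norm_ne_zero_iff.mp (by rw [hv i]; exact one_ne_zero)) hδ
  rw [Fintype.card_fin, ← mul_assoc] at h
  exact h

lemma averageSplitRatioBound_le_div_mst (hv : ∀ i, ‖v i‖ = 1) (hsum : ∑ i, v i = 0)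
    (hδ : 0 < δ) (hδ' : δ ≤ 1 / 2) (hN : N ≠ 0) (hR : R ⊆ clusterPointSet v δ N)
    (hsplit : ∀ i, Splits R (cluster δ N (v i))) :
    (3 + 2 * √3 - 7 * δ) / (3 * (1 + N * δ)) ≤
      (mst R + mst (clusterPointSet v δ N \ R)) / mst (clusterPointSet v δ N) := by
  have hsqrt : 1 ≤ √3 := Real.one_le_sqrt.mpr (by norm_num)
  have hmst := mst_clusterPointSet_pos hv hsum hδ.le (by linarith) hN
  calc (3 + 2 * √3 - 7 * δ) / (3 * (1 + N * δ))
      ≤ (3 + 2 * √3 - 7 * δ) / mst (clusterPointSet v δ N) :=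
        div_le_div_of_nonneg_left (by linarith) hmst (mst_clusterPointSet_le hv hδ hN)
    _ ≤ (mst R + mst (clusterPointSet v δ N \ R)) / mst (clusterPointSet v δ N) := by
        gcongr
        exact le_mst_add_mst_sdiff hv hsum hδ.le hR hsplit

lemma averageSplitRatioBound_le (hv : ∀ i, ‖v i‖ = 1) (hsum : ∑ i, v i = 0) (hδ : 0 < δ)
    (hδ' : δ ≤ 1 / 2) (hN : N ≠ 0) :
    averageSplitRatioBound N δ ≤ averageSplitRatio (clusterPointSet v δ N) := by
  set P := clusterPointSet v δ N
  set F := P.powerset.filter fun R => R.Nonempty ∧ R ≠ P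
  have h2P : 2 ≤ #P := two_le_card_clusterPointSet hv hN
  have hNP : N ≤ #P := by
    have := card_le_card (cluster_subset_clusterPointSet (v := v) (δ := δ) (N := N) 0)
    rwa [card_cluster (norm_ne_zero_iff.mp (by rw [hv 0]; exact one_ne_zero)) hδ] at this
  have h4 : (4 : ℝ) ≤ 2 ^ #P := by
    calc (4 : ℝ) = 2 ^ 2 := by norm_num
      _ ≤ 2 ^ #P := pow_le_pow_right₀ one_le_two h2P
  have hF : (#F : ℝ) = 2 ^ #P - 2 := by
    rw [card_filter_nonempty_ne_self P ⟨0, mem_insert_self _ _⟩,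
      Nat.cast_sub (le_trans (by norm_num) (Nat.pow_le_pow_right two_pos h2P))]
    norm_num
  have hFne : F.Nonempty := card_pos.mp (by exact_mod_cast (show (0 : ℝ) < #F by linarith))
  have hbad : (#{R ∈ F | ¬∀ i, Splits R (cluster δ N (v i))} : ℝ) ≤ 6 * 2 ^ (#P - N) := by
    exact_mod_cast (card_le_card (filter_subset_filter _ (filter_subset _ _))).trans
      (card_filter_not_forall_splits_cluster_le hv hδ)
  have hsqrt : 1 ≤ √3 := Real.one_le_sqrt.mpr (by norm_num)
  have hmst := mst_clusterPointSet_pos hv hsum hδ.le (by linarith) hN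
  have ht : 0 ≤ (3 + 2 * √3 - 7 * δ) / (3 * (1 + N * δ)) := div_nonneg (by linarith) (by positivity)
  have key := one_sub_div_mul_le_sum_div F _ ht
    (fun R _ => div_nonneg (add_nonneg (mst_nonneg R) (mst_nonneg (P \ R))) hmst.le)
    (fun R hR => averageSplitRatioBound_le_div_mst hv hsum hδ hδ' hN
      (mem_powerset.mp (mem_filter.mp hR).1)) hbad hFne
  rw [hF] at key
  refine le_trans ?_ key
  exact mul_le_mul_of_nonneg_right (sub_le_sub_left (six_mul_two_pow_sub_div_le hNP h2P) 1) ht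

end Construction

lemma exists_norm_eq_one_sum_eq_zero :
    ∃ v : Fin 3 → EuclideanSpace ℝ (Fin 2), (∀ i, ‖v i‖ = 1) ∧ ∑ i, v i = 0 := by
  obtain ⟨ζ, hζ⟩ : ∃ ζ : ℂ, IsPrimitiveRoot ζ 3 := ⟨_, Complex.isPrimitiveRoot_exp 3 (by norm_num)⟩
  let e := Complex.orthonormalBasisOneI.repr
  refine ⟨fun i => e (ζ ^ (i : ℕ)), fun i => ?_, ?_⟩
  · rw [e.norm_map, norm_pow, hζ.norm'_eq_one (by norm_num), one_pow]
  · rw [← map_sum, Fin.sum_univ_eq_sum_range (fun k => _ ^ k) 3,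
      hζ.geom_sum_eq_zero (by norm_num), map_zero]

open Filter Topology in
lemma exists_lt_averageSplitRatioBound {c : ℝ} (hc : c < (3 + 2 * √3) / 3) :
    ∃ N ≠ 0, ∃ δ > 0, δ ≤ 1 / 2 ∧ c < averageSplitRatioBound N δ := by
  set K := (3 + 2 * √3) / 3
  have hlimN : Tendsto (fun N : ℕ => (1 - 12 / 2 ^ N) * K) atTop (𝓝 K) := by
    have h := tendsto_const_nhds (x := (12 : ℝ)).div_atTop
      (tendsto_pow_atTop_atTop_of_one_lt one_lt_two)
    simpa using ((tendsto_const_nhds (x := (1 : ℝ))).sub h).mul_const K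
  obtain ⟨N, hNK, hN⟩ := ((hlimN.eventually (lt_mem_nhds hc)).and (eventually_ne_atTop 0)).exists
  have hlimδ : Tendsto (averageSplitRatioBound N) (𝓝 0) (𝓝 ((1 - 12 / 2 ^ N) * K)) := by
    have h : ContinuousAt (averageSplitRatioBound N) 0 := by
      unfold averageSplitRatioBound
      fun_prop (disch := norm_num)
    simpa [K, averageSplitRatioBound] using h.tendsto
  obtain ⟨δ, ⟨hlt, hδ'⟩, hδ⟩ := ((((hlimδ.eventually (lt_mem_nhds hNK)).and
    (eventually_le_nhds (by norm_num : (0 : ℝ) < 1 / 2))).filter_mono nhdsWithin_le_nhds).and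
    (self_mem_nhdsWithin (s := Set.Ioi 0))).exists
  exact ⟨N, hN, δ, hδ, hδ', hlt⟩

theorem exists_pointset_average_mst_ratio_large (ε : ℝ) (hε : 0 < ε) :
    ∃ P : Finset (EuclideanSpace ℝ (Fin 2)),
      (∑ R ∈ P.powerset.filter (fun R => R.Nonempty ∧ R ≠ P),
          (mst R + mst (P \ R)) / mst P) / ((2 : ℝ) ^ P.card - 2) >
        (3 + 2 * Real.sqrt 3) / 3 - ε := by
  obtain ⟨v, hv, hsum⟩ := exists_norm_eq_one_sum_eq_zero
  obtain ⟨N, hN, δ, hδ, hδ', hlt⟩ :=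
    exists_lt_averageSplitRatioBound (c := (3 + 2 * √3) / 3 - ε) (by linarith)
  exact ⟨clusterPointSet v δ N, hlt.trans_le (averageSplitRatioBound_le hv hsum hδ hδ' hN)⟩
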